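/- arXiv:2408.03914 — 2 statements merged into one kernel-verified Lean document; each statement's English description precedes it below -/
import Mathlib

section
/- Let α = a + b·i ∈ ℂ with a ≠ 0 and b ≠ 0, let z₀ ∈ ℂ \ {0}, and define z : ℝ → ℂ by z(t) = z₀ · exp((b + a·i)·t). Then: (1) z(t) ≠ 0 and Re(α · z'(t)/z(t)) = 0 for all t (so z is tangent to the kernel of the real 1-form Re(α dz/z)); (2) the set of t ∈ ℝ with z(t) ∈ ℝ₊·z₀ (i.e., z(t) a positive real multiple of z₀) is infinite; and (3) for every ε > 0 there exists t in this set with 0 < |z(t)| < ε. -/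
/-!
Writing `z(t) = z₀ e^{bt} e^{iat}`, the argument of `z` turns with constant speed `a ≠ 0` while
its modulus grows or decays exponentially at rate `b ≠ 0`. So `z` returns to the ray `ℝ₊·z₀` at
every time `2πk/a`, `k ∈ ℤ`, with modulus `e^{2πbk/a}‖z₀‖`, which becomes arbitrarily small for a
suitable sign of `k`. Tangency holds because `z' = (b + ai) z` and `(a + bi)(b + ai) = (a² + b²) i`.
-/

open Real Complex

lemma exists_int_mul_lt {q : ℝ} (hq : q ≠ 0) (M : ℝ) : ∃ k : ℤ, q * k < M := by
  rcases hq.lt_or_gt with hq | hq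
  · obtain ⟨k, hk⟩ := exists_int_gt (M / q)
    exact ⟨k, by rwa [div_lt_iff_of_neg hq, mul_comm] at hk⟩
  · obtain ⟨k, hk⟩ := exists_int_lt (M / q)
    exact ⟨k, by rwa [lt_div_iff₀ hq, mul_comm] at hk⟩

lemma hasDerivAt_const_mul_cexp_ofReal (z₀ c : ℂ) (t : ℝ) :
    HasDerivAt (fun t : ℝ => z₀ * cexp (c * t)) (c * (z₀ * cexp (c * t))) t := by
  have h := ((((hasDerivAt_id (t : ℂ)).const_mul c).cexp).const_mul z₀).comp_ofReal
  simpa only [id, mul_one, mul_left_comm c, mul_comm (cexp _) c] using h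

lemma re_add_mul_I_mul_swap (a b : ℝ) : (((a : ℂ) + b * I) * (b + a * I)).re = 0 := by
  simp only [mul_re, add_re, add_im, ofReal_re, ofReal_im, mul_re, mul_im, I_re, I_im]
  ring

lemma const_mul_cexp_at_int_period {a : ℝ} (ha : a ≠ 0) (b : ℝ) (z₀ : ℂ) (k : ℤ) :
    z₀ * cexp ((b + a * I) * ↑(2 * π * k / a)) = ↑(rexp (b * (2 * π * k / a))) * z₀ := by
  have hsplit : ((b : ℂ) + a * I) * ↑(2 * π * k / a) =
      ↑(b * (2 * π * k / a)) + k * (2 * π * I) := by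
    have ha' : (a : ℂ) ≠ 0 := ofReal_ne_zero.mpr ha
    push_cast
    field_simp
  rw [hsplit, Complex.exp_add, exp_int_mul_two_pi_mul_I, ofReal_exp]
  ring

/-- Focus (spiral) dynamics of the real 1-form `Re(α dz/z)` for `α = a + bi` with
`a, b ≠ 0`: the curve `z(t) = z₀ e^{(b+ai)t}` is tangent to its kernel, crosses the
ray `ℝ₊·z₀` infinitely many times, and does so with modulus arbitrarily small. -/
theorem stmt4 (a b : ℝ) (ha : a ≠ 0) (hb : b ≠ 0) (α : ℂ)
    (hα : α = (a : ℂ) + (b : ℂ) * Complex.I)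
    (z₀ : ℂ) (hz₀ : z₀ ≠ 0) (z : ℝ → ℂ)
    (hz : ∀ t : ℝ, z t = z₀ * Complex.exp (((b : ℂ) + (a : ℂ) * Complex.I) * (t : ℂ))) :
    (∀ t : ℝ, z t ≠ 0 ∧ (α * deriv z t / z t).re = 0) ∧
    {t : ℝ | ∃ r : ℝ, 0 < r ∧ z t = (r : ℂ) * z₀}.Infinite ∧
    (∀ ε > (0:ℝ), ∃ t : ℝ, (∃ r : ℝ, 0 < r ∧ z t = (r : ℂ) * z₀) ∧
      0 < ‖z t‖ ∧ ‖z t‖ < ε) := by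
  obtain rfl : z = fun t : ℝ => z₀ * cexp ((b + a * I) * t) := funext hz
  subst hα
  have hne (t : ℝ) : z₀ * cexp ((b + a * I) * t) ≠ 0 := mul_ne_zero hz₀ (Complex.exp_ne_zero _)
  have hcross (k : ℤ) : ∃ r : ℝ, 0 < r ∧
      z₀ * cexp ((b + a * I) * ↑(2 * π * k / a)) = r * z₀ :=
    ⟨_, exp_pos _, const_mul_cexp_at_int_period ha b z₀ k⟩
  refine ⟨fun t => ⟨hne t, ?_⟩, ?_, fun ε hε => ?_⟩
  · rw [(hasDerivAt_const_mul_cexp_ofReal z₀ _ t).deriv, mul_div_assoc, mul_div_assoc,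
      div_self (hne t), mul_one]
    exact re_add_mul_I_mul_swap a b
  · refine Set.infinite_of_injective_forall_mem (f := fun k : ℤ => 2 * π * k / a) ?_ hcross
    intro m n hmn
    field_simp [pi_ne_zero] at hmn
    exact_mod_cast hmn
  · have hz₀pos : 0 < ‖z₀‖ := norm_pos_iff.mpr hz₀
    obtain ⟨k, hk⟩ := exists_int_mul_lt (q := 2 * π * b / a) (by positivity) (log (ε / ‖z₀‖))
    refine ⟨2 * π * k / a, hcross k, norm_pos_iff.mpr (hne _), ?_⟩
    beta_reduce
    rw [const_mul_cexp_at_int_period ha, norm_mul, norm_real, norm_of_nonneg (exp_pos _).le,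
      ← lt_div_iff₀ hz₀pos, ← lt_log_iff_exp_lt (by positivity)]
    calc b * (2 * π * k / a) = 2 * π * b / a * k := by ring
      _ < Real.log (ε / ‖z₀‖) := hk
end

section
/- Let k ≥ 1 and μ ∈ ℝ, and let τ be the 1-form on (ℂ\{0})² given at (x,y) by τ(v,w) = (μ/y + 1/y^{k+1})·w − v/x. Then the real 1-form Re(τ) is exact on (ℂ\{0})²: Re(τ) = dF where F(x,y) = μ log|y| − log|x| − Re(1/(k yᵏ)). Consequently, any two points joined by a differentiable curve everywhere tangent to ker Re(τ) have the same value of F, and every differentiable curve with endpoints in a level set {F = c} has an interior point of tangency with ker Re(τ). -/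
/-!
`Re τ = dF` on `(ℂ*)²`: the real differential of `log ‖z‖` is `v ↦ Re (v / z)`, and
`Re (1 / (k yᵏ))` is the real part of a holomorphic function with derivative `-1 / y^{k+1}`.
Along a curve `γ` this gives `(F ∘ γ)' = Re τ(γ, γ')`, so tangency to `ker Re τ` makes `F ∘ γ`
constant, and equal values of `F` at the endpoints give a zero of `(F ∘ γ)'` by Rolle's theorem.
-/

open Set Complex
open scoped RealInnerProductSpace

theorem hasFDerivAt_log_norm {E : Type*} [NormedAddCommGroup E] [InnerProductSpace ℝ E]
    {x : E} (hx : x ≠ 0) :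
    HasFDerivAt (fun z => Real.log ‖z‖) ((‖x‖ ^ 2)⁻¹ • innerSL ℝ x) x := by
  have hlog : (fun z : E => Real.log ‖z‖) = fun z => 2⁻¹ * Real.log (‖z‖ ^ 2) := by
    ext z; rw [Real.log_pow]; push_cast; ring
  have hL : (‖x‖ ^ 2)⁻¹ • innerSL ℝ x = (2⁻¹ : ℝ) • (‖x‖ ^ 2)⁻¹ • (2 : ℕ) • innerSL ℝ x := by
    ext v; simp; ring
  rw [hlog, hL]
  exact ((hasStrictFDerivAt_norm_sq x).hasFDerivAt.log (by positivity)).const_mul 2⁻¹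

theorem Complex.inv_norm_sq_mul_real_inner (x v : ℂ) : (‖x‖ ^ 2)⁻¹ * ⟪x, v⟫ = (v / x).re := by
  rw [Complex.inner, div_re, ← normSq_eq_norm_sq]
  simp; ring

theorem HasDerivAt.hasFDerivAt_re {f : ℂ → ℂ} {f' z : ℂ} (hf : HasDerivAt f f' z) :
    HasFDerivAt (fun w => (f w).re) (reCLM.comp (f' • (1 : ℂ →L[ℝ] ℂ))) z :=
  reCLM.hasFDerivAt.comp z hf.complexToReal_fderiv

theorem hasDerivAt_one_div_natCast_mul_pow {𝕜 : Type*} [NontriviallyNormedField 𝕜] [CharZero 𝕜]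
    {k : ℕ} (hk : k ≠ 0) {z : 𝕜} (hz : z ≠ 0) :
    HasDerivAt (fun w : 𝕜 => 1 / ((k : 𝕜) * w ^ k)) (-(1 / z ^ (k + 1))) z := by
  have hfun : (fun w : 𝕜 => 1 / ((k : 𝕜) * w ^ k)) = fun w => (k : 𝕜)⁻¹ * w ^ (-k : ℤ) := by
    ext w; simp [zpow_neg, mul_comm]
  have hder : -(1 / z ^ (k + 1)) = (k : 𝕜)⁻¹ * ((-k : ℤ) * z ^ ((-k : ℤ) - 1)) := by
    have : (-k : ℤ) - 1 = -((k + 1 : ℕ) : ℤ) := by push_cast; ring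
    rw [this, zpow_neg, zpow_natCast]
    push_cast
    field_simp
  rw [hfun, hder]
  exact (hasDerivAt_zpow (-k : ℤ) z (Or.inl hz)).const_mul _

noncomputable def saddleNodeIntegral (μ : ℝ) (k : ℕ) (p : ℂ × ℂ) : ℝ :=
  μ * Real.log ‖p.2‖ - Real.log ‖p.1‖ - (1 / ((k : ℂ) * p.2 ^ k)).re

noncomputable def saddleNodeForm (μ : ℝ) (k : ℕ) (p v : ℂ × ℂ) : ℂ :=
  ((μ : ℂ) / p.2 + 1 / p.2 ^ (k + 1)) * v.2 - v.1 / p.1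

theorem differentiableAt_and_fderiv_saddleNodeIntegral (μ : ℝ) {k : ℕ} (hk : k ≠ 0) {p : ℂ × ℂ}
    (h1 : p.1 ≠ 0) (h2 : p.2 ≠ 0) :
    DifferentiableAt ℝ (saddleNodeIntegral μ k) p ∧
      ∀ v, fderiv ℝ (saddleNodeIntegral μ k) p v = (saddleNodeForm μ k p v).re := by
  have hf : HasFDerivAt (saddleNodeIntegral μ k) _ p :=
    (((hasFDerivAt_log_norm h2).comp p hasFDerivAt_snd).const_mul μ
      |>.sub ((hasFDerivAt_log_norm h1).comp p hasFDerivAt_fst)).sub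
      ((hasDerivAt_one_div_natCast_mul_pow hk h2).hasFDerivAt_re.comp p hasFDerivAt_snd)
  refine ⟨hf.differentiableAt, fun v => ?_⟩
  have hsplit : saddleNodeForm μ k p v
      = μ * (v.2 / p.2) - v.1 / p.1 - (-(1 / p.2 ^ (k + 1))) * v.2 := by
    unfold saddleNodeForm; ring
  rw [hf.fderiv, hsplit]
  simp only [sub_apply, ContinuousLinearMap.comp_apply,
    smul_apply, ContinuousLinearMap.coe_fst', ContinuousLinearMap.coe_snd',
    one_apply_eq_self, innerSL_apply_apply, reCLM_apply, smul_eq_mul,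
    Complex.inv_norm_sq_mul_real_inner, sub_re, re_ofReal_mul]

section Curves

variable {E : Type*} [NormedAddCommGroup E] [NormedSpace ℝ E] {f : E → ℝ} {γ : ℝ → E} {a b : ℝ}

theorem hasDerivAt_comp_curve {t : ℝ} (hγ : DifferentiableAt ℝ γ t)
    (hf : DifferentiableAt ℝ f (γ t)) :
    HasDerivAt (f ∘ γ) (fderiv ℝ f (γ t) (deriv γ t)) t :=
  hf.hasFDerivAt.comp_hasDerivAt t hγ.hasDerivAt

theorem continuousOn_comp_curve (hγ : ∀ t ∈ Icc a b, DifferentiableAt ℝ γ t)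
    (hf : ∀ t ∈ Icc a b, DifferentiableAt ℝ f (γ t)) : ContinuousOn (f ∘ γ) (Icc a b) :=
  fun t ht => (hasDerivAt_comp_curve (hγ t ht) (hf t ht)).continuousAt.continuousWithinAt

theorem eq_of_fderiv_apply_deriv_eq_zero (hab : a ≤ b)
    (hγ : ∀ t ∈ Icc a b, DifferentiableAt ℝ γ t) (hf : ∀ t ∈ Icc a b, DifferentiableAt ℝ f (γ t))
    (htan : ∀ t ∈ Ico a b, fderiv ℝ f (γ t) (deriv γ t) = 0) : f (γ a) = f (γ b) := by
  refine (constant_of_has_deriv_right_zero (continuousOn_comp_curve hγ hf) (fun t ht => ?_) b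
    (right_mem_Icc.2 hab)).symm
  have ht' := Ico_subset_Icc_self ht
  rw [← htan t ht]
  exact (hasDerivAt_comp_curve (hγ t ht') (hf t ht')).hasDerivWithinAt

theorem exists_mem_Ioo_fderiv_apply_deriv_eq_zero (hab : a < b)
    (hγ : ∀ t ∈ Icc a b, DifferentiableAt ℝ γ t) (hf : ∀ t ∈ Icc a b, DifferentiableAt ℝ f (γ t))
    (hfab : f (γ a) = f (γ b)) : ∃ t ∈ Ioo a b, fderiv ℝ f (γ t) (deriv γ t) = 0 :=
  exists_hasDerivAt_eq_zero hab (continuousOn_comp_curve hγ hf) hfab fun t ht =>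
    hasDerivAt_comp_curve (hγ t (Ioo_subset_Icc_self ht)) (hf t (Ioo_subset_Icc_self ht))

end Curves

/-- For real `μ`, `Re(τ)` with `τ = (μ/y + 1/y^{k+1})dy - dx/x` is exact on `(ℂ*)²`,
equal to `dF` for `F(x,y) = μ log|y| - log|x| - Re(1/(k yᵏ))`.  Consequently, `F` is
constant along curves tangent to `ker Re(τ)`, and every curve with endpoints in a level
set of `F` has an interior tangency with `ker Re(τ)` (Rolle property). -/
theorem stmt18 (k : ℕ) (hk : 1 ≤ k) (μ : ℝ)
    (τ : ℂ × ℂ → ℂ × ℂ → ℂ)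
    (hτ : ∀ p v, τ p v = ((μ : ℂ) / p.2 + 1 / p.2 ^ (k + 1)) * v.2 - v.1 / p.1)
    (F : ℂ × ℂ → ℝ)
    (hF : ∀ p, F p = μ * Real.log ‖p.2‖ - Real.log ‖p.1‖
      - (1 / ((k : ℂ) * p.2 ^ k)).re) :
    (∀ p : ℂ × ℂ, p.1 ≠ 0 → p.2 ≠ 0 →
      DifferentiableAt ℝ F p ∧ ∀ v, fderiv ℝ F p v = (τ p v).re) ∧
    (∀ γ : ℝ → ℂ × ℂ,
      (∀ t ∈ Set.Icc (0:ℝ) 1, DifferentiableAt ℝ γ t ∧ (γ t).1 ≠ 0 ∧ (γ t).2 ≠ 0 ∧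
        (τ (γ t) (deriv γ t)).re = 0) →
      F (γ 0) = F (γ 1)) ∧
    (∀ γ : ℝ → ℂ × ℂ,
      (∀ t ∈ Set.Icc (0:ℝ) 1, DifferentiableAt ℝ γ t ∧ (γ t).1 ≠ 0 ∧ (γ t).2 ≠ 0) →
      F (γ 0) = F (γ 1) →
      ∃ t ∈ Set.Ioo (0:ℝ) 1, (τ (γ t) (deriv γ t)).re = 0) := by
  obtain rfl : τ = saddleNodeForm μ k := funext₂ hτ
  obtain rfl : F = saddleNodeIntegral μ k := funext hF
  have hdF (p : ℂ × ℂ) (h1 : p.1 ≠ 0) (h2 : p.2 ≠ 0) :=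
    differentiableAt_and_fderiv_saddleNodeIntegral μ (Nat.one_le_iff_ne_zero.mp hk) h1 h2
  refine ⟨hdF, fun γ hγ => ?_, fun γ hγ hγF => ?_⟩
  · refine eq_of_fderiv_apply_deriv_eq_zero zero_le_one (fun t ht => (hγ t ht).1)
      (fun t ht => (hdF _ (hγ t ht).2.1 (hγ t ht).2.2.1).1) fun t ht => ?_
    obtain ⟨-, h1, h2, htan⟩ := hγ t (Ico_subset_Icc_self ht)
    rw [(hdF _ h1 h2).2, htan]
  · obtain ⟨t, ht, htan⟩ := exists_mem_Ioo_fderiv_apply_deriv_eq_zero zero_lt_one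
      (fun t ht => (hγ t ht).1) (fun t ht => (hdF _ (hγ t ht).2.1 (hγ t ht).2.2).1) hγF
    obtain ⟨-, h1, h2⟩ := hγ t (Ioo_subset_Icc_self ht)
    exact ⟨t, ht, (hdF _ h1 h2).2 _ ▸ htan⟩
end
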